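/- arXiv:1507.08479 — 2 statements merged into one kernel-verified Lean document; each statement's English description precedes it below -/
import Mathlib

section
/- Let r ≥ 0 be a fixed natural number, 0 < α ≤ 1, and M > 0. There exists a constant D_r > 0 (depending only on r) such that for every natural number n ≥ 1, all reals p, q with 0 < q < p ≤ 1, and every r-times continuously differentiable f : [0,1] → ℝ whose r-th derivative satisfies |f^{(r)}(u) − f^{(r)}(v)| ≤ M|u − v|^α for all u, v ∈ [0,1] (i.e. f^{(r)} ∈ Lip_M(α)): sup_{x∈[0,1]} |B^{[r]}_{n,p,q}(f; x) − f(x)| ≤ D_r · M · [n]_{p,q}^{−(r+α)/2}. -/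
/-!
Put `t = q / p`. Factoring powers of `p` out of the basis functions and nodes shows that
`B^{[r]}_{n,p,q} f (x)` averages, against Phillips' `t`-Bernstein weights, the degree-`r` Taylor
polynomials of `f` at the nodes `[k]_t / [n]_t`, evaluated at `x`. Taylor's formula with Hölder
remainder bounds each error by `M |[k]_t / [n]_t - x| ^ (r + α)`, and Jensen's inequality reduces
the average of these to the `2(r+1)`-th central moment of the nodes.

That moment is `O([n]_t ^ (-(r+1)))`. The weights are the law after `n` steps of a chain on `k`
that moves `k ↦ k + 1` with probability `t ^ (n - k) x`, along which `[k]_t - [n]_t x` is a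
martingale whose `n`-th increment is bounded by `1` and has variance at most `t ^ n`; hence its
`2m`-th moment grows per step by `O(t ^ n [n]_t ^ (m - 1))`, and `[n+1]_t = [n]_t + t ^ n` turns
this into the bound `C_m [n]_t ^ m` by induction on `m`. Finally `[n]_{p,q} ≤ [n]_t`.
-/

open Finset Set

/-- The `(p,q)`-integer `[k]_{p,q} = (p^k - q^k)/(p - q)` (so `[0]_{p,q} = 0`). -/
noncomputable def pqInt (p q : ℝ) (k : ℕ) : ℝ := (p ^ k - q ^ k) / (p - q)

/-- The `(p,q)`-factorial `[k]_{p,q}! = ∏_{j=1}^k [j]_{p,q}` (`[0]_{p,q}! = 1`). -/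
noncomputable def pqFact (p q : ℝ) (k : ℕ) : ℝ := ∏ j ∈ Finset.range k, pqInt p q (j + 1)

/-- The `(p,q)`-binomial coefficient. -/
noncomputable def pqBinom (p q : ℝ) (n k : ℕ) : ℝ :=
  pqFact p q n / (pqFact p q k * pqFact p q (n - k))

/-- The `(p,q)`-Bernstein basis function
`P_{n,k}(p,q;x) = p^{k(k-1)/2} [n choose k]_{p,q} x^k ∏_{s=0}^{n-k-1} (p^s - q^s x)`. -/
noncomputable def pqBern (p q : ℝ) (n k : ℕ) (x : ℝ) : ℝ :=
  p ^ (k * (k - 1) / 2) * pqBinom p q n k * x ^ k *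
    ∏ s ∈ Finset.range (n - k), (p ^ s - q ^ s * x)

/-- The node `x_{n,k} = p^{n-k} [k]_{p,q} / [n]_{p,q}`. -/
noncomputable def pqNode (p q : ℝ) (n k : ℕ) : ℝ := p ^ (n - k) * pqInt p q k / pqInt p q n

/-- The `(p,q)`-power central moment
`B_{n,p,q}((t-a)^m_{p,q}; y) = p^{-n(n-1)/2} ∑_{k=0}^n (∏_{s=0}^{m-1}(p^s x_{n,k} - q^s a)) P_{n,k}(p,q;y)`. -/
noncomputable def pqPowMoment (p q : ℝ) (n m : ℕ) (a y : ℝ) : ℝ :=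
  (p ^ (n * (n - 1) / 2))⁻¹ *
    ∑ k ∈ Finset.range (n + 1),
      (∏ s ∈ Finset.range m, (p ^ s * pqNode p q n k - q ^ s * a)) * pqBern p q n k y

/-- The `m`-th absolute central moment
`B_{n,p,q}(|t-x|^m; x) = p^{-n(n-1)/2} ∑_{k=0}^n |x_{n,k} - x|^m P_{n,k}(p,q;x)`. -/
noncomputable def pqAbsMoment (p q : ℝ) (n m : ℕ) (x : ℝ) : ℝ :=
  (p ^ (n * (n - 1) / 2))⁻¹ *
    ∑ k ∈ Finset.range (n + 1), |pqNode p q n k - x| ^ m * pqBern p q n k x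

/-- The ordinary `m`-th central moment
`B_{n,p,q}((t-x)^m; x) = p^{-n(n-1)/2} ∑_{k=0}^n (x_{n,k} - x)^m P_{n,k}(p,q;x)`. -/
noncomputable def pqMoment (p q : ℝ) (n m : ℕ) (x : ℝ) : ℝ :=
  (p ^ (n * (n - 1) / 2))⁻¹ *
    ∑ k ∈ Finset.range (n + 1), (pqNode p q n k - x) ^ m * pqBern p q n k x

/-- The `(p,q)`-Bernstein operator `B_{n,p,q}(f;x)`. -/
noncomputable def pqBernstein (p q : ℝ) (n : ℕ) (f : ℝ → ℝ) (x : ℝ) : ℝ :=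
  (p ^ (n * (n - 1) / 2))⁻¹ *
    ∑ k ∈ Finset.range (n + 1), f (pqNode p q n k) * pqBern p q n k x

/-- The `r`-th order generalization `B^{[r]}_{n,p,q}(f;x)` where `f^{(i)}` is interpreted as
`iteratedDerivWithin i f (Set.Icc 0 1)`. -/
noncomputable def pqBernsteinR (p q : ℝ) (n r : ℕ) (f : ℝ → ℝ) (x : ℝ) : ℝ :=
  (p ^ (n * (n - 1) / 2))⁻¹ *
    ∑ k ∈ Finset.range (n + 1), pqBern p q n k x *
      ∑ i ∈ Finset.range (r + 1),
        iteratedDerivWithin i f (Set.Icc 0 1) (pqNode p q n k) / (i.factorial : ℝ) *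
          (x - pqNode p q n k) ^ i

/-- The modulus of continuity on `[0,1]`:
`ω(g; δ) = sup { |g u - g v| : u, v ∈ [0,1], |u - v| ≤ δ }`. -/
noncomputable def modulusOfContinuity (g : ℝ → ℝ) (δ : ℝ) : ℝ :=
  sSup {d : ℝ | ∃ u ∈ Set.Icc (0 : ℝ) 1, ∃ v ∈ Set.Icc (0 : ℝ) 1, |u - v| ≤ δ ∧ d = |g u - g v|}

noncomputable def qInt (q : ℝ) (n : ℕ) : ℝ := ∑ s ∈ range n, q ^ s

noncomputable def qFact (q : ℝ) (n : ℕ) : ℝ := ∏ j ∈ range n, qInt q (j + 1)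

noncomputable def qBinom (q : ℝ) : ℕ → ℕ → ℝ
  | 0, 0 => 1
  | 0, _ + 1 => 0
  | _ + 1, 0 => 1
  | n + 1, k + 1 => q ^ (n - k) * qBinom q n k + qBinom q n (k + 1)

/-- Phillips' `q`-Bernstein basis. -/
noncomputable def qBern (q : ℝ) (n k : ℕ) (x : ℝ) : ℝ :=
  qBinom q n k * x ^ k * ∏ s ∈ range (n - k), (1 - q ^ s * x)

section QAnalogue

variable {q : ℝ}

lemma qInt_succ (q : ℝ) (n : ℕ) : qInt q (n + 1) = qInt q n + q ^ n := sum_range_succ _ n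

lemma qInt_add (q : ℝ) (a b : ℕ) : qInt q (a + b) = qInt q a + q ^ a * qInt q b := by
  simp only [qInt, sum_range_add, pow_add, mul_sum]

lemma qInt_nonneg (hq : 0 ≤ q) (n : ℕ) : 0 ≤ qInt q n :=
  sum_nonneg fun _ _ => pow_nonneg hq _

lemma one_le_qInt (hq : 0 ≤ q) {n : ℕ} (hn : 1 ≤ n) : 1 ≤ qInt q n := by
  obtain ⟨m, rfl⟩ := Nat.exists_eq_add_of_le' hn
  rw [qInt, sum_range_succ', pow_zero]
  exact le_add_of_nonneg_left (sum_nonneg fun _ _ => pow_nonneg hq _)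

lemma qInt_mono (hq : 0 ≤ q) {k n : ℕ} (hkn : k ≤ n) : qInt q k ≤ qInt q n :=
  sum_le_sum_of_subset_of_nonneg (range_subset_range.2 hkn) fun i _ _ => pow_nonneg hq i

@[simp] lemma qBinom_zero_right (q : ℝ) (n : ℕ) : qBinom q n 0 = 1 := by
  cases n <;> rfl

lemma qBinom_succ_succ (q : ℝ) (n k : ℕ) :
    qBinom q (n + 1) (k + 1) = q ^ (n - k) * qBinom q n k + qBinom q n (k + 1) := rfl

lemma qBinom_eq_zero_of_lt (q : ℝ) : ∀ {n k : ℕ}, n < k → qBinom q n k = 0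
  | 0, _ + 1, _ => rfl
  | n + 1, k + 1, h => by
    rw [qBinom_succ_succ, qBinom_eq_zero_of_lt q (by omega), qBinom_eq_zero_of_lt q (by omega)]
    ring

lemma qBinom_self (q : ℝ) : ∀ n : ℕ, qBinom q n n = 1
  | 0 => rfl
  | n + 1 => by rw [qBinom_succ_succ, qBinom_self q n, qBinom_eq_zero_of_lt q (by omega)]; simp

lemma qBinom_nonneg (hq : 0 ≤ q) : ∀ n k : ℕ, 0 ≤ qBinom q n k
  | 0, 0 => zero_le_one
  | 0, _ + 1 => le_rfl
  | _ + 1, 0 => zero_le_one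
  | n + 1, k + 1 => by
    have := qBinom_nonneg hq n k
    have := qBinom_nonneg hq n (k + 1)
    rw [qBinom_succ_succ]
    positivity

lemma qFact_pos (hq : 0 ≤ q) (n : ℕ) : 0 < qFact q n :=
  prod_pos fun _ _ => one_pos.trans_le (one_le_qInt hq (by omega))

lemma qFact_succ (q : ℝ) (n : ℕ) : qFact q (n + 1) = qFact q n * qInt q (n + 1) :=
  prod_range_succ _ n

theorem qBinom_mul_qFact_mul_qFact (q : ℝ) :
    ∀ {n k : ℕ}, k ≤ n → qBinom q n k * (qFact q k * qFact q (n - k)) = qFact q n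
  | _, 0, _ => by simp [qFact]
  | 0, _ + 1, h => absurd h (by omega)
  | n + 1, k + 1, h => by
    rcases Nat.lt_or_eq_of_le h with h | h
    · obtain ⟨d, rfl⟩ := Nat.exists_eq_add_of_lt (Nat.succ_lt_succ_iff.1 h)
      have e₁ := qBinom_mul_qFact_mul_qFact q (n := k + d + 1) (k := k) (by omega)
      have e₂ := qBinom_mul_qFact_mul_qFact q (n := k + d + 1) (k := k + 1) (by omega)
      have hsplit := qInt_add q (d + 1) (k + 1)
      rw [show k + d + 1 - k = d + 1 by omega, qFact_succ q d] at e₁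
      rw [show k + d + 1 - (k + 1) = d by omega, qFact_succ q k] at e₂
      rw [show k + d + 1 + 1 - (k + 1) = d + 1 by omega, qBinom_succ_succ,
        show k + d + 1 - k = d + 1 by omega, qFact_succ q k, qFact_succ q d, qFact_succ,
        show k + d + 1 + 1 = d + 1 + (k + 1) by omega, hsplit]
      linear_combination (q ^ (d + 1) * qInt q (k + 1)) * e₁ + qInt q (d + 1) * e₂
    · obtain rfl : k = n := by omega
      simp [qBinom_self, qFact]

end QAnalogue

section QBernstein

variable {q x : ℝ}

lemma qBern_nonneg (hq0 : 0 ≤ q) (hq1 : q ≤ 1) (hx0 : 0 ≤ x) (hx1 : x ≤ 1) (n k : ℕ) :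
    0 ≤ qBern q n k x := by
  refine mul_nonneg (mul_nonneg (qBinom_nonneg hq0 n k) (pow_nonneg hx0 k))
    (prod_nonneg fun s _ => sub_nonneg.2 ?_)
  exact mul_le_one₀ (pow_le_one₀ hq0 hq1) hx0 hx1

lemma qBern_eq_zero_of_lt {n k : ℕ} (h : n < k) : qBern q n k x = 0 := by
  simp [qBern, qBinom_eq_zero_of_lt q h]

lemma qBern_succ_zero (q x : ℝ) (n : ℕ) :
    qBern q (n + 1) 0 x = (1 - q ^ n * x) * qBern q n 0 x := by
  simp only [qBern, qBinom_zero_right, Nat.sub_zero, prod_range_succ]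
  ring

lemma qBern_succ_succ (q x : ℝ) (n k : ℕ) :
    qBern q (n + 1) (k + 1) x =
      q ^ (n - k) * x * qBern q n k x + (1 - q ^ (n - (k + 1)) * x) * qBern q n (k + 1) x := by
  rcases lt_or_ge k n with h | h
  · obtain ⟨d, rfl⟩ := Nat.exists_eq_add_of_lt h
    simp only [qBern, qBinom_succ_succ, show k + d + 1 + 1 - (k + 1) = d + 1 by omega,
      show k + d + 1 - (k + 1) = d by omega, show k + d + 1 - k = d + 1 by omega, prod_range_succ]
    ring
  · rw [qBern_eq_zero_of_lt (show n < k + 1 by omega)]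
    rcases h.lt_or_eq with h | rfl
    · rw [qBern_eq_zero_of_lt (show n + 1 < k + 1 by omega), qBern_eq_zero_of_lt h]
      ring
    · simp [qBern, qBinom_self]
      ring

/-- One step of the `q`-Bernstein distribution: from `n` to `n + 1` the index `k` moves to `k + 1`
with probability `q ^ (n - k) * x` and stays put otherwise. -/
theorem sum_qBern_succ_mul (q x : ℝ) (n : ℕ) (g : ℕ → ℝ) :
    ∑ k ∈ range (n + 2), qBern q (n + 1) k x * g k =
      ∑ k ∈ range (n + 1), qBern q n k x *
        (q ^ (n - k) * x * g (k + 1) + (1 - q ^ (n - k) * x) * g k) := by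
  set stay : ℕ → ℝ := fun k => (1 - q ^ (n - k) * x) * qBern q n k x * g k
  have hstay : ∑ k ∈ range (n + 1), stay (k + 1) + stay 0 = ∑ k ∈ range (n + 1), stay k := by
    rw [← sum_range_succ', sum_range_succ]
    simp [stay, qBern_eq_zero_of_lt (Nat.lt_succ_self n)]
  rw [sum_range_succ', qBern_succ_zero]
  simp only [qBern_succ_succ, add_mul, sum_add_distrib, mul_add]
  rw [add_assoc, show (1 - q ^ n * x) * qBern q n 0 x * g 0 = stay 0 by simp [stay], hstay]
  simp only [stay]
  congr 1 <;> exact sum_congr rfl fun k _ => by ring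

theorem sum_qBern (q x : ℝ) (n : ℕ) : ∑ k ∈ range (n + 1), qBern q n k x = 1 := by
  induction n with
  | zero => simp [qBern]
  | succ n ih =>
    have step := sum_qBern_succ_mul q x n fun _ => 1
    simp only [mul_one, add_sub_cancel, ih] at step
    exact step

end QBernstein

lemma abs_pow_le_one_add_pow_two_mul (z : ℝ) {j m : ℕ} (hj : j ≤ 2 * m) :
    |z| ^ j ≤ 1 + z ^ (2 * m) := by
  have hz : z ^ (2 * m) = |z| ^ (2 * m) := (Even.pow_abs ⟨m, two_mul m⟩ z).symm
  rcases le_total |z| 1 with h | h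
  · have := pow_le_one₀ (abs_nonneg z) h (n := j)
    have := pow_nonneg (abs_nonneg z) (2 * m)
    linarith
  · have := pow_le_pow_right₀ h hj
    linarith

lemma sum_range_choose_add_two_le (m : ℕ) :
    ∑ k ∈ range (2 * m + 1), ((2 * m + 2).choose (k + 2) : ℝ) ≤ 4 ^ (m + 1) := by
  have h := congrArg (Nat.cast (R := ℝ)) (Nat.sum_range_choose (2 * m + 2))
  rw [sum_range_succ', sum_range_succ'] at h
  push_cast at h
  rw [show (4 : ℝ) ^ (m + 1) = 2 ^ (2 * m + 2) by
    rw [show 2 * m + 2 = 2 * (m + 1) by ring, pow_mul]; norm_num, ← h]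
  have : (0 : ℝ) ≤ ((2 * m + 2).choose (0 + 1) : ℕ) := Nat.cast_nonneg _
  simp only [zero_add, Nat.choose_zero_right, Nat.cast_one] at this ⊢
  linarith

theorem add_pow_even_le {z d : ℝ} (hd : |d| ≤ 1) (m : ℕ) :
    (z + d) ^ (2 * m + 2) ≤
      z ^ (2 * m + 2) + (2 * m + 2) * z ^ (2 * m + 1) * d +
        4 ^ (m + 1) * d ^ 2 * (1 + z ^ (2 * m)) := by
  have hterm : ∀ k ∈ range (2 * m + 1),
      d ^ (k + 1 + 1) * z ^ (2 * m - k) * ((2 * m + 2).choose (k + 1 + 1) : ℝ) ≤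
        ((2 * m + 2).choose (k + 2) : ℝ) * (d ^ 2 * (1 + z ^ (2 * m))) := by
    intro k hk
    have hk : k ≤ 2 * m := Nat.lt_succ_iff.1 (mem_range.1 hk)
    have hdk : |d| ^ k ≤ 1 := pow_le_one₀ (abs_nonneg d) hd
    have hzk := abs_pow_le_one_add_pow_two_mul z (show 2 * m - k ≤ 2 * m by omega)
    calc d ^ (k + 1 + 1) * z ^ (2 * m - k) * ((2 * m + 2).choose (k + 1 + 1) : ℝ)
        ≤ |d ^ (k + 2) * z ^ (2 * m - k)| * ((2 * m + 2).choose (k + 2) : ℝ) :=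
          mul_le_mul_of_nonneg_right (le_abs_self _) (Nat.cast_nonneg _)
      _ = ((2 * m + 2).choose (k + 2) : ℝ) * (|d| ^ k * d ^ 2 * |z| ^ (2 * m - k)) := by
          rw [abs_mul, abs_pow, abs_pow, pow_add, ← sq_abs d]
          ring
      _ ≤ ((2 * m + 2).choose (k + 2) : ℝ) * (1 * d ^ 2 * (1 + z ^ (2 * m))) := by
          gcongr
      _ = _ := by ring
  have hsum := sum_le_sum hterm
  rw [← sum_mul] at hsum
  have hchoose := mul_le_mul_of_nonneg_right (sum_range_choose_add_two_le m)
    (mul_nonneg (sq_nonneg d) (add_nonneg zero_le_one (Even.pow_nonneg ⟨m, two_mul m⟩ z)))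
  rw [add_comm z, add_pow, sum_range_succ', sum_range_succ']
  simp only [Nat.choose_zero_right, Nat.choose_one_right, pow_zero, pow_one, Nat.sub_zero,
    zero_add, Nat.cast_one, mul_one, one_mul, show 2 * m + 2 - 1 = 2 * m + 1 by omega]
  push_cast
  linarith

/-- A mean-zero step, to `z + (1 - π) s` with probability `π` and to `z - π s` otherwise, raises
the even moments by a multiple of its variance `π (1 - π) s² ≤ π s`. -/
theorem two_point_pow_le {π s z : ℝ} (hπ0 : 0 ≤ π) (hπ1 : π ≤ 1) (hs0 : 0 ≤ s) (hs1 : s ≤ 1)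
    (m : ℕ) :
    π * (z + (1 - π) * s) ^ (2 * m + 2) + (1 - π) * (z - π * s) ^ (2 * m + 2) ≤
      z ^ (2 * m + 2) + 4 ^ (m + 1) * (π * s) * (1 + z ^ (2 * m)) := by
  have hd₁ : |(1 - π) * s| ≤ 1 := by
    rw [abs_of_nonneg (by nlinarith)]; nlinarith
  have hd₂ : |-(π * s)| ≤ 1 := by
    rw [abs_neg, abs_of_nonneg (by positivity)]; nlinarith
  have h₁ := mul_le_mul_of_nonneg_left (add_pow_even_le (z := z) hd₁ m) hπ0
  have h₂ := mul_le_mul_of_nonneg_left (add_pow_even_le (z := z) hd₂ m) (sub_nonneg.2 hπ1)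
  have hvar : π * ((1 - π) * s) ^ 2 + (1 - π) * (-(π * s)) ^ 2 ≤ π * s := by
    have : π * (1 - π) * s * s ≤ π * s := by
      have := mul_le_one₀ (sub_le_self 1 hπ0) hs0 hs1
      nlinarith [mul_nonneg hπ0 hs0]
    linear_combination this
  have hK : 0 ≤ (4 : ℝ) ^ (m + 1) * (1 + z ^ (2 * m)) :=
    mul_nonneg (by positivity) (add_nonneg zero_le_one (Even.pow_nonneg ⟨m, two_mul m⟩ z))
  rw [sub_eq_add_neg z]
  linear_combination h₁ + h₂ + mul_le_mul_of_nonneg_right hvar hK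

noncomputable def qMoment (q x : ℝ) (n m : ℕ) : ℝ :=
  ∑ k ∈ range (n + 1), qBern q n k x * (qInt q k - qInt q n * x) ^ m

section Moments

variable {q x : ℝ}

lemma qMoment_zero_right (q x : ℝ) (n : ℕ) : qMoment q x n 0 = 1 := by
  simp [qMoment, sum_qBern]

lemma qMoment_zero_left (q x : ℝ) {m : ℕ} (hm : m ≠ 0) : qMoment q x 0 m = 0 := by
  simp [qMoment, qInt, hm]

theorem qMoment_succ_le (hq0 : 0 ≤ q) (hq1 : q ≤ 1) (hx0 : 0 ≤ x) (hx1 : x ≤ 1) (n m : ℕ) :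
    qMoment q x (n + 1) (2 * m + 2) ≤
      qMoment q x n (2 * m + 2) + 4 ^ (m + 1) * q ^ n * (1 + qMoment q x n (2 * m)) := by
  have hterm : ∀ k ∈ range (n + 1),
      qBern q n k x * (q ^ (n - k) * x * (qInt q (k + 1) - qInt q (n + 1) * x) ^ (2 * m + 2) +
          (1 - q ^ (n - k) * x) * (qInt q k - qInt q (n + 1) * x) ^ (2 * m + 2)) ≤
        qBern q n k x * (qInt q k - qInt q n * x) ^ (2 * m + 2) +
          4 ^ (m + 1) * q ^ n *
            (qBern q n k x + qBern q n k x * (qInt q k - qInt q n * x) ^ (2 * m)) := by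
    intro k hk
    have hk : k ≤ n := Nat.lt_succ_iff.1 (mem_range.1 hk)
    have hqn : q ^ (n - k) * x * q ^ k = q ^ n * x := by
      rw [mul_right_comm, ← pow_add, Nat.sub_add_cancel hk]
    have hπ0 : 0 ≤ q ^ (n - k) * x := mul_nonneg (pow_nonneg hq0 _) hx0
    have hπ1 : q ^ (n - k) * x ≤ 1 := mul_le_one₀ (pow_le_one₀ hq0 hq1) hx0 hx1
    have hstep := two_point_pow_le (z := qInt q k - qInt q n * x) hπ0 hπ1 (pow_nonneg hq0 k)
      (pow_le_one₀ hq0 hq1) m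
    rw [hqn] at hstep
    have hup : qInt q (k + 1) - qInt q (n + 1) * x =
        qInt q k - qInt q n * x + (1 - q ^ (n - k) * x) * q ^ k := by
      rw [qInt_succ, qInt_succ]; linear_combination hqn
    have hstay : qInt q k - qInt q (n + 1) * x = qInt q k - qInt q n * x - q ^ n * x := by
      rw [qInt_succ]; ring
    rw [hup, hstay]
    have hb := qBern_nonneg hq0 hq1 hx0 hx1 n k
    have hmore : 4 ^ (m + 1) * (q ^ n * x) * (1 + (qInt q k - qInt q n * x) ^ (2 * m)) ≤
        4 ^ (m + 1) * q ^ n * (1 + (qInt q k - qInt q n * x) ^ (2 * m)) := by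
      have hc : (0 : ℝ) ≤ 4 ^ (m + 1) * q ^ n := mul_nonneg (by positivity) (pow_nonneg hq0 n)
      rw [← mul_assoc]
      exact mul_le_mul_of_nonneg_right (mul_le_of_le_one_right hc hx1)
        (add_nonneg zero_le_one (Even.pow_nonneg ⟨m, two_mul m⟩ _))
    linear_combination mul_le_mul_of_nonneg_left (hstep.trans (add_le_add_right hmore _)) hb
  calc qMoment q x (n + 1) (2 * m + 2)
      = ∑ k ∈ range (n + 1), qBern q n k x *
          (q ^ (n - k) * x * (qInt q (k + 1) - qInt q (n + 1) * x) ^ (2 * m + 2) +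
            (1 - q ^ (n - k) * x) * (qInt q k - qInt q (n + 1) * x) ^ (2 * m + 2)) :=
        sum_qBern_succ_mul q x n fun k => (qInt q k - qInt q (n + 1) * x) ^ (2 * m + 2)
    _ ≤ _ := sum_le_sum hterm
    _ = _ := by
        simp only [qMoment, sum_add_distrib, ← mul_sum, sum_qBern]

end Moments

noncomputable def qMomentConst : ℕ → ℝ
  | 0 => 1
  | m + 1 => 4 ^ (m + 1) * (1 + qMomentConst m)

lemma one_le_qMomentConst : ∀ m : ℕ, 1 ≤ qMomentConst m
  | 0 => le_rfl
  | m + 1 => by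
    have := one_le_qMomentConst m
    have := one_le_pow₀ (show (1 : ℝ) ≤ 4 by norm_num) (n := m + 1)
    simp only [qMomentConst]
    nlinarith

theorem qMoment_le {q x : ℝ} (hq0 : 0 ≤ q) (hq1 : q ≤ 1) (hx0 : 0 ≤ x) (hx1 : x ≤ 1) (m n : ℕ) :
    qMoment q x n (2 * m) ≤ qMomentConst m * qInt q n ^ m := by
  induction m generalizing n with
  | zero => simp [qMoment_zero_right, qMomentConst]
  | succ m ihm =>
    rw [mul_add_one]
    induction n with
    | zero => simp [qMoment_zero_left, qInt]
    | succ n ihn =>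
      have hG0 := qInt_nonneg hq0 n
      have hG := qInt_mono hq0 (Nat.le_succ n)
      have hG1 : 1 ≤ qInt q (n + 1) ^ m := one_le_pow₀ (one_le_qInt hq0 (Nat.le_add_left 1 n))
      have hlower : 1 + qMoment q x n (2 * m) ≤ (1 + qMomentConst m) * qInt q (n + 1) ^ m := by
        have := mul_le_mul_of_nonneg_left (pow_le_pow_left₀ hG0 hG m)
          (zero_le_one.trans (one_le_qMomentConst m))
        linarith [ihm n]
      have hgrow : qInt q n ^ (m + 1) + q ^ n * qInt q (n + 1) ^ m ≤ qInt q (n + 1) ^ (m + 1) := by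
        have := mul_le_mul_of_nonneg_left (pow_le_pow_left₀ hG0 hG m) hG0
        rw [pow_succ' _ m, pow_succ' _ m, qInt_succ] at *
        linarith
      have hc : (0 : ℝ) ≤ 4 ^ (m + 1) * q ^ n := by have := pow_nonneg hq0 n; positivity
      calc qMoment q x (n + 1) (2 * m + 2)
          ≤ qMoment q x n (2 * m + 2) + 4 ^ (m + 1) * q ^ n * (1 + qMoment q x n (2 * m)) :=
            qMoment_succ_le hq0 hq1 hx0 hx1 n m
        _ ≤ qMomentConst (m + 1) * qInt q n ^ (m + 1) +
              4 ^ (m + 1) * q ^ n * ((1 + qMomentConst m) * qInt q (n + 1) ^ m) :=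
            add_le_add ihn (mul_le_mul_of_nonneg_left hlower hc)
        _ = qMomentConst (m + 1) * (qInt q n ^ (m + 1) + q ^ n * qInt q (n + 1) ^ m) := by
            simp only [qMomentConst]; ring
        _ ≤ qMomentConst (m + 1) * qInt q (n + 1) ^ (m + 1) :=
            mul_le_mul_of_nonneg_left hgrow (zero_le_one.trans (one_le_qMomentConst _))

section PQReduction

variable {p q : ℝ}

lemma prod_range_pow (p : ℝ) (n : ℕ) : ∏ j ∈ range n, p ^ j = p ^ (n * (n - 1) / 2) := by
  rw [prod_pow_eq_pow_sum, sum_range_id]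

lemma pqInt_eq (hq : 0 < q) (hqp : q < p) (n : ℕ) : pqInt p q n = p ^ n * qInt (q / p) n / p := by
  have hp : 0 < p := hq.trans hqp
  have ht : q / p ≠ 1 := ((div_lt_one hp).2 hqp).ne
  have hpq : p - q ≠ 0 := sub_ne_zero.2 hqp.ne'
  have hqp' : q - p ≠ 0 := sub_ne_zero.2 hqp.ne
  rw [pqInt, qInt, geom_sum_eq ht, div_pow]
  field_simp
  ring

lemma pqInt_le_qInt (hq : 0 < q) (hqp : q < p) (hp1 : p ≤ 1) (n : ℕ) :
    pqInt p q n ≤ qInt (q / p) n := by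
  have hp : 0 < p := hq.trans hqp
  rw [pqInt_eq hq hqp]
  cases n with
  | zero => simp [qInt]
  | succ n =>
    rw [pow_succ, mul_right_comm, mul_div_cancel_right₀ _ hp.ne']
    exact mul_le_of_le_one_left (qInt_nonneg (div_pos hq hp).le _) (pow_le_one₀ hp.le hp1)

lemma pqInt_pos (hq : 0 < q) (hqp : q < p) {n : ℕ} (hn : 1 ≤ n) : 0 < pqInt p q n := by
  have hp : 0 < p := hq.trans hqp
  have := one_le_qInt (div_pos hq hp).le hn
  rw [pqInt_eq hq hqp]
  positivity

lemma pqFact_eq (hq : 0 < q) (hqp : q < p) (n : ℕ) :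
    pqFact p q n = p ^ (n * (n - 1) / 2) * qFact (q / p) n := by
  have hp : 0 < p := hq.trans hqp
  rw [← prod_range_pow, qFact, ← prod_mul_distrib, pqFact]
  refine prod_congr rfl fun j _ => ?_
  rw [pqInt_eq hq hqp, pow_succ]
  field_simp

lemma pqBinom_eq (hq : 0 < q) (hqp : q < p) {n k : ℕ} (hk : k ≤ n) :
    pqBinom p q n k =
      p ^ (n * (n - 1) / 2) / (p ^ (k * (k - 1) / 2) * p ^ ((n - k) * (n - k - 1) / 2)) *
        qBinom (q / p) n k := by
  have hp : 0 < p := hq.trans hqp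
  have := qFact_pos (div_pos hq hp).le k
  have := qFact_pos (div_pos hq hp).le (n - k)
  rw [pqBinom, pqFact_eq hq hqp, pqFact_eq hq hqp, pqFact_eq hq hqp,
    ← qBinom_mul_qFact_mul_qFact (q / p) hk]
  field_simp

theorem pqBern_eq (hq : 0 < q) (hqp : q < p) {n k : ℕ} (hk : k ≤ n) (x : ℝ) :
    pqBern p q n k x = p ^ (n * (n - 1) / 2) * qBern (q / p) n k x := by
  have hp : 0 < p := hq.trans hqp
  have hprod : ∏ s ∈ range (n - k), (p ^ s - q ^ s * x) =
      p ^ ((n - k) * (n - k - 1) / 2) * ∏ s ∈ range (n - k), (1 - (q / p) ^ s * x) := by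
    rw [← prod_range_pow, ← prod_mul_distrib]
    refine prod_congr rfl fun s _ => ?_
    rw [div_pow]
    field_simp
  rw [pqBern, pqBinom_eq hq hqp hk, hprod, qBern]
  field_simp
  ring_nf

lemma pqNode_eq (hq : 0 < q) (hqp : q < p) {n k : ℕ} (hk : k ≤ n) :
    pqNode p q n k = qInt (q / p) k / qInt (q / p) n := by
  have hp : 0 < p := hq.trans hqp
  rw [pqNode, pqInt_eq hq hqp, pqInt_eq hq hqp, mul_div_assoc', div_div_div_cancel_right₀ hp.ne',
    ← mul_assoc, ← pow_add, Nat.sub_add_cancel hk, mul_div_mul_left _ _ (pow_ne_zero n hp.ne')]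

theorem pqBernsteinR_eq_sum (hq : 0 < q) (hqp : q < p) (n r : ℕ) (f : ℝ → ℝ) (x : ℝ) :
    pqBernsteinR p q n r f x = ∑ k ∈ range (n + 1), qBern (q / p) n k x *
      taylorWithinEval f r (Icc 0 1) (qInt (q / p) k / qInt (q / p) n) x := by
  have hp : 0 < p := hq.trans hqp
  rw [pqBernsteinR, mul_sum]
  refine sum_congr rfl fun k hk => ?_
  have hk : k ≤ n := Nat.lt_succ_iff.1 (mem_range.1 hk)
  rw [pqBern_eq hq hqp hk, pqNode_eq hq hqp hk, taylor_within_apply, ← mul_assoc, ← mul_assoc,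
    inv_mul_cancel₀ (pow_ne_zero _ hp.ne'), one_mul]
  congr 1
  refine sum_congr rfl fun i _ => ?_
  rw [smul_eq_mul]
  ring

end PQReduction

theorem abs_sub_taylorWithinEval_le {s : Set ℝ} (hs : UniqueDiffOn ℝ s) (hsc : Convex ℝ s)
    {α M : ℝ} (hα : 0 ≤ α) (hM : 0 ≤ M) (r : ℕ) {f : ℝ → ℝ} (hf : ContDiffOn ℝ r f s)
    (hf_holder : ∀ u ∈ s, ∀ v ∈ s,
      |iteratedDerivWithin r f s u - iteratedDerivWithin r f s v| ≤ M * |u - v| ^ α)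
    {a x : ℝ} (ha : a ∈ s) (hx : x ∈ s) :
    |f x - taylorWithinEval f r s a x| ≤ M * |x - a| ^ ((r : ℝ) + α) := by
  induction r generalizing f x with
  | zero => simpa using hf_holder x hx a ha
  | succ r ih =>
    have hseg : uIcc a x ⊆ s := segment_eq_uIcc a x ▸ hsc.segment_subset ha hx
    have hfd : DifferentiableOn ℝ f s := hf.differentiableOn (by simp)
    have hderiv : ∀ y ∈ uIcc a x,
        HasDerivWithinAt (fun z => f z - taylorWithinEval f (r + 1) s a z)
          (derivWithin f s y - taylorWithinEval (derivWithin f s) r s a y) (uIcc a x) y :=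
      fun y hy => (((hfd y (hseg hy)).hasDerivWithinAt).mono hseg).sub
        (hasDerivAt_taylorWithinEval_succ f r).hasDerivWithinAt
    have hbound : ∀ y ∈ uIcc a x,
        ‖derivWithin f s y - taylorWithinEval (derivWithin f s) r s a y‖ ≤
          M * |x - a| ^ ((r : ℝ) + α) := by
      intro y hy
      rw [Real.norm_eq_abs]
      refine (ih (hf.derivWithin hs (by simp))
        (by simpa only [iteratedDerivWithin_succ'] using hf_holder) (hseg hy)).trans ?_
      exact mul_le_mul_of_nonneg_left
        (Real.rpow_le_rpow (abs_nonneg _) (abs_sub_left_of_mem_uIcc hy) (by positivity)) hM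
    have hmvt := (convex_uIcc a x).norm_image_sub_le_of_norm_hasDerivWithin_le hderiv hbound
      left_mem_uIcc right_mem_uIcc
    rw [taylorWithinEval_self, sub_self, sub_zero, Real.norm_eq_abs, Real.norm_eq_abs] at hmvt
    rw [Nat.cast_succ, add_right_comm, Real.rpow_add_one' (abs_nonneg _) (by positivity),
      ← mul_assoc]
    exact hmvt

lemma abs_sum_mul_sub_le {ι : Type*} (s : Finset ι) {w : ι → ℝ} (hw : ∀ i ∈ s, 0 ≤ w i)
    (hw1 : ∑ i ∈ s, w i = 1) (g : ι → ℝ) (c : ℝ) :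
    |∑ i ∈ s, w i * g i - c| ≤ ∑ i ∈ s, w i * |g i - c| := by
  calc |∑ i ∈ s, w i * g i - c| = |∑ i ∈ s, w i * (g i - c)| := by
        simp only [mul_sub, sum_sub_distrib, ← sum_mul, hw1, one_mul]
    _ ≤ ∑ i ∈ s, |w i * (g i - c)| := abs_sum_le_sum_abs _ _
    _ = ∑ i ∈ s, w i * |g i - c| :=
        sum_congr rfl fun i hi => by rw [abs_mul, abs_of_nonneg (hw i hi)]

lemma sum_mul_abs_rpow_le {ι : Type*} (s : Finset ι) {w : ι → ℝ} (hw : ∀ i ∈ s, 0 ≤ w i)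
    (hw1 : ∑ i ∈ s, w i = 1) (d : ι → ℝ) {β : ℝ} (hβ : 0 < β) {m : ℕ} (hβm : β ≤ 2 * m) :
    ∑ i ∈ s, w i * |d i| ^ β ≤ (∑ i ∈ s, w i * d i ^ (2 * m)) ^ (β / (2 * m)) := by
  have hm : (0 : ℝ) < 2 * m := hβ.trans_le hβm
  have hpow : ∀ i, (|d i| ^ β) ^ ((2 * m : ℝ) / β) = d i ^ (2 * m) := by
    intro i
    rw [← Real.rpow_mul (abs_nonneg _), mul_div_cancel₀ _ hβ.ne', ← Nat.cast_ofNat,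
      ← Nat.cast_mul, Real.rpow_natCast, Even.pow_abs ⟨m, two_mul m⟩]
  have h := Real.arith_mean_le_rpow_mean s w (fun i => |d i| ^ β) hw hw1
    (fun i _ => Real.rpow_nonneg (abs_nonneg _) β) ((one_le_div hβ).2 hβm)
  simpa only [hpow, one_div_div] using h

theorem sum_qBern_mul_abs_rpow_le {q x : ℝ} (hq0 : 0 ≤ q) (hq1 : q ≤ 1) (hx0 : 0 ≤ x)
    (hx1 : x ≤ 1) {n : ℕ} (hn : 1 ≤ n) {β : ℝ} (hβ : 0 < β) {m : ℕ} (hβm : β ≤ 2 * m) :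
    ∑ k ∈ range (n + 1), qBern q n k x * |qInt q k / qInt q n - x| ^ β ≤
      qMomentConst m * qInt q n ^ (-β / 2) := by
  have hG := one_le_qInt hq0 hn
  have hG0 : 0 < qInt q n := one_pos.trans_le hG
  have hm : (0 : ℝ) < 2 * m := hβ.trans_le hβm
  have hc := one_le_qMomentConst m
  have hnorm : ∑ k ∈ range (n + 1), qBern q n k x * (qInt q k / qInt q n - x) ^ (2 * m) =
      qMoment q x n (2 * m) / qInt q n ^ (2 * m) := by
    rw [qMoment, sum_div]
    refine sum_congr rfl fun k _ => ?_
    rw [div_sub' hG0.ne', div_pow, mul_div_assoc]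
  have hmoment : ∑ k ∈ range (n + 1), qBern q n k x * (qInt q k / qInt q n - x) ^ (2 * m) ≤
      qMomentConst m / qInt q n ^ m := by
    rw [hnorm, div_le_div_iff₀ (by positivity) (by positivity), pow_mul', sq, ← mul_assoc]
    exact mul_le_mul_of_nonneg_right (qMoment_le hq0 hq1 hx0 hx1 m n) (by positivity)
  have hmoment0 : 0 ≤ ∑ k ∈ range (n + 1), qBern q n k x * (qInt q k / qInt q n - x) ^ (2 * m) :=
    sum_nonneg fun k _ => mul_nonneg (qBern_nonneg hq0 hq1 hx0 hx1 n k)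
      (Even.pow_nonneg ⟨m, two_mul m⟩ _)
  calc ∑ k ∈ range (n + 1), qBern q n k x * |qInt q k / qInt q n - x| ^ β
      ≤ (∑ k ∈ range (n + 1), qBern q n k x * (qInt q k / qInt q n - x) ^ (2 * m)) ^
          (β / (2 * m)) :=
        sum_mul_abs_rpow_le _ (fun k _ => qBern_nonneg hq0 hq1 hx0 hx1 n k) (sum_qBern q x n) _
          hβ hβm
    _ ≤ (qMomentConst m / qInt q n ^ m) ^ (β / (2 * m)) :=
        Real.rpow_le_rpow hmoment0 hmoment (by positivity)
    _ = qMomentConst m ^ (β / (2 * m)) * qInt q n ^ (-β / 2) := by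
        rw [Real.div_rpow (by positivity) (by positivity), ← Real.rpow_natCast,
          ← Real.rpow_mul hG0.le, div_eq_mul_inv, ← Real.rpow_neg hG0.le]
        have : (m : ℝ) ≠ 0 := by linarith
        congr 2
        field_simp
    _ ≤ qMomentConst m * qInt q n ^ (-β / 2) :=
        mul_le_mul_of_nonneg_right (Real.rpow_le_self_of_one_le hc ((div_le_one hm).2 hβm))
          (by positivity)

lemma qInt_div_qInt_mem_Icc {q : ℝ} (hq : 0 ≤ q) {k n : ℕ} (hk : k ≤ n) :
    qInt q k / qInt q n ∈ Icc (0 : ℝ) 1 :=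
  ⟨div_nonneg (qInt_nonneg hq k) (qInt_nonneg hq n),
    div_le_one_of_le₀ (qInt_mono hq hk) (qInt_nonneg hq n)⟩

theorem abs_pqBernsteinR_sub_le {p q : ℝ} (hq : 0 < q) (hqp : q < p) {α M : ℝ} (hα : 0 ≤ α)
    (hM : 0 ≤ M) {n r : ℕ} {f : ℝ → ℝ} (hf : ContDiffOn ℝ r f (Icc 0 1))
    (hf_holder : ∀ u ∈ Icc (0 : ℝ) 1, ∀ v ∈ Icc (0 : ℝ) 1,
      |iteratedDerivWithin r f (Icc 0 1) u - iteratedDerivWithin r f (Icc 0 1) v| ≤ M * |u - v| ^ α)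
    {x : ℝ} (hx : x ∈ Icc (0 : ℝ) 1) :
    |pqBernsteinR p q n r f x - f x| ≤
      M * ∑ k ∈ range (n + 1), qBern (q / p) n k x *
        |qInt (q / p) k / qInt (q / p) n - x| ^ ((r : ℝ) + α) := by
  have ht0 : 0 ≤ q / p := div_nonneg hq.le (hq.trans hqp).le
  have ht1 : q / p ≤ 1 := (div_le_one (hq.trans hqp)).2 hqp.le
  have hw : ∀ k ∈ range (n + 1), 0 ≤ qBern (q / p) n k x :=
    fun k _ => qBern_nonneg ht0 ht1 hx.1 hx.2 n k
  rw [pqBernsteinR_eq_sum hq hqp, mul_sum]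
  refine (abs_sum_mul_sub_le _ hw (sum_qBern _ x n) _ _).trans (sum_le_sum fun k hk => ?_)
  have hnode := qInt_div_qInt_mem_Icc ht0 (Nat.lt_succ_iff.1 (mem_range.1 hk))
  rw [abs_sub_comm, abs_sub_comm _ x, mul_left_comm]
  exact mul_le_mul_of_nonneg_left (abs_sub_taylorWithinEval_le (uniqueDiffOn_Icc zero_lt_one)
    (convex_Icc 0 1) hα hM r hf hf_holder hnode hx) (hw k hk)

/-- if `f^{(r)} ∈ Lip_M(α)` then
`‖B^{[r]}_{n,p,q} f - f‖ ≤ D_r M [n]^{-(r+α)/2}`. -/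
theorem pq_bernsteinR_lipschitz_rate (r : ℕ) (α M : ℝ) (hα0 : 0 < α) (hα1 : α ≤ 1)
    (hM : 0 < M) :
    ∃ D : ℝ, 0 < D ∧
      ∀ (n : ℕ), 1 ≤ n → ∀ p q : ℝ, 0 < q → q < p → p ≤ 1 →
        ∀ f : ℝ → ℝ, ContDiffOn ℝ r f (Set.Icc 0 1) →
          (∀ u ∈ Set.Icc (0 : ℝ) 1, ∀ v ∈ Set.Icc (0 : ℝ) 1,
            |iteratedDerivWithin r f (Set.Icc 0 1) u -
                iteratedDerivWithin r f (Set.Icc 0 1) v| ≤ M * |u - v| ^ α) →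
          ∀ x ∈ Set.Icc (0 : ℝ) 1,
            |pqBernsteinR p q n r f x - f x| ≤
              D * M * pqInt p q n ^ (-((r : ℝ) + α) / 2) := by
  have hD := one_le_qMomentConst (r + 1)
  refine ⟨qMomentConst (r + 1), one_pos.trans_le hD, ?_⟩
  intro n hn p q hq hqp hp1 f hf hf_holder x hx
  have hr : (0 : ℝ) ≤ r := r.cast_nonneg
  have ht0 : 0 ≤ q / p := div_nonneg hq.le (hq.trans hqp).le
  have ht1 : q / p ≤ 1 := (div_le_one (hq.trans hqp)).2 hqp.le
  calc |pqBernsteinR p q n r f x - f x|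
      ≤ M * ∑ k ∈ range (n + 1), qBern (q / p) n k x *
          |qInt (q / p) k / qInt (q / p) n - x| ^ ((r : ℝ) + α) :=
        abs_pqBernsteinR_sub_le hq hqp hα0.le hM.le hf hf_holder hx
    _ ≤ M * (qMomentConst (r + 1) * qInt (q / p) n ^ (-((r : ℝ) + α) / 2)) :=
        mul_le_mul_of_nonneg_left (sum_qBern_mul_abs_rpow_le ht0 ht1 hx.1 hx.2 hn
          (by positivity) (by push_cast; linarith)) hM.le
    _ ≤ qMomentConst (r + 1) * M * pqInt p q n ^ (-((r : ℝ) + α) / 2) := by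
        rw [mul_left_comm, ← mul_assoc]
        exact mul_le_mul_of_nonneg_left (Real.rpow_le_rpow_of_nonpos (pqInt_pos hq hqp hn)
          (pqInt_le_qInt hq hqp hp1 n) (by linarith)) (by positivity)
end

section
/- Let (p_n), (q_n) be sequences with 0 < q_n < p_n ≤ 1 for each n, lim_{n→∞} p_n^n = 1 and lim_{n→∞} q_n^n = 1 (so in particular p_n → 1, q_n → 1 and [n]_{p_n,q_n} → ∞). Then for every twice continuously differentiable function f : [0,1] → ℝ: lim_{n→∞} [n]_{p_n,q_n} · ( B_{n,p_n,q_n}(f; x) − f(x) ) = (x(1−x)/2) f''(x), uniformly for x ∈ [0,1]. -/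
open Finset Set

/-!
Put `t = q/p`. All powers of `p` cancel: `B_{n,p,q} = B_{n,1,t}` and `[n]_{p,q} = p^{n-1} [n]_{1,t}`,
with `p_n^{n-1} → 1` and `[n]_{1,t_n} ≥ n t_n^n → ∞`. So it suffices to treat `p = 1`, where
`[j+1] - [i+1] = q ([j] - [i])` makes the `q`-falling factorial moments exact:
`∑_k ∏_{i<m} ([k] - [i]) P_{n,k}(x) = ∏_{i<m} ([n] - [i]) x^m`. They give the central moments
`0`, `x(1-x)/[n]` and a fourth moment `≤ 2/[n]^2`; in the last one the terms of order `[n]`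
cancel and `[n](1-q) = 1 - q^n ≤ 1` controls the rest. Uniform continuity of `f''` bounds the
Taylor remainder at `s` by `ε (s-x)^2 + K (s-x)^4`, hence
`|[n](B_n f(x) - f(x)) - x(1-x) f''(x)/2| ≤ ε + 2K/[n]` uniformly on `[0,1]`.
-/

open Filter Topology

theorem pqInt_zero (p q : ℝ) : pqInt p q 0 = 0 := by simp [pqInt]

section QIntegers

variable {q : ℝ}

theorem pqInt_one_eq_sum (hq : q ≠ 1) (k : ℕ) : pqInt 1 q k = ∑ j ∈ range k, q ^ j := by
  rw [geom_sum_eq hq, pqInt, one_pow, ← neg_sub, ← neg_sub q, neg_div_neg_eq]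

theorem pqInt_one_add (hq : q ≠ 1) (j m : ℕ) :
    pqInt 1 q (j + m) = pqInt 1 q j + q ^ j * pqInt 1 q m := by
  simp only [pqInt_one_eq_sum hq, sum_range_add, mul_sum, pow_add]

theorem pqInt_one_succ (hq : q ≠ 1) (k : ℕ) : pqInt 1 q (k + 1) = 1 + q * pqInt 1 q k := by
  rw [add_comm, pqInt_one_add hq, pqInt_one_eq_sum hq 1]
  simp

theorem pqInt_one_nonneg (hq₀ : 0 ≤ q) (hq₁ : q < 1) (k : ℕ) : 0 ≤ pqInt 1 q k := by
  rw [pqInt_one_eq_sum hq₁.ne]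
  positivity

theorem one_le_pqInt_one (hq₀ : 0 ≤ q) (hq₁ : q < 1) {k : ℕ} (hk : k ≠ 0) :
    1 ≤ pqInt 1 q k := by
  obtain ⟨k, rfl⟩ := Nat.exists_eq_succ_of_ne_zero hk
  rw [pqInt_one_succ hq₁.ne]
  have := pqInt_one_nonneg hq₀ hq₁ k
  nlinarith

theorem pqInt_one_pos (hq₀ : 0 ≤ q) (hq₁ : q < 1) {k : ℕ} (hk : k ≠ 0) : 0 < pqInt 1 q k :=
  one_pos.trans_le (one_le_pqInt_one hq₀ hq₁ hk)

theorem pqInt_one_mono (hq₀ : 0 ≤ q) (hq₁ : q < 1) {k n : ℕ} (hkn : k ≤ n) :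
    pqInt 1 q k ≤ pqInt 1 q n := by
  obtain ⟨m, rfl⟩ := Nat.exists_eq_add_of_le hkn
  rw [pqInt_one_add hq₁.ne]
  have := pqInt_one_nonneg hq₀ hq₁ m
  have := pow_nonneg hq₀ k
  nlinarith

theorem pqInt_one_mul_one_sub (hq : q ≠ 1) (n : ℕ) : pqInt 1 q n * (1 - q) = 1 - q ^ n := by
  rw [pqInt, one_pow, div_mul_cancel₀ _ (sub_ne_zero.2 hq.symm)]

theorem natCast_mul_pow_le_pqInt_one (hq₀ : 0 ≤ q) (hq₁ : q < 1) (n : ℕ) :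
    n * q ^ n ≤ pqInt 1 q n := by
  rw [pqInt_one_eq_sum hq₁.ne]
  calc (n : ℝ) * q ^ n = ∑ _j ∈ range n, q ^ n := by simp
    _ ≤ ∑ j ∈ range n, q ^ j :=
      sum_le_sum fun j hj => pow_le_pow_of_le_one hq₀ hq₁.le (mem_range.1 hj).le

end QIntegers

section QBinomial

variable {q : ℝ}

theorem pqFact_zero (p q : ℝ) : pqFact p q 0 = 1 := prod_range_zero _

theorem pqFact_succ (p q : ℝ) (k : ℕ) : pqFact p q (k + 1) = pqFact p q k * pqInt p q (k + 1) :=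
  prod_range_succ _ _

theorem pqFact_one_pos (hq₀ : 0 ≤ q) (hq₁ : q < 1) (k : ℕ) : 0 < pqFact 1 q k :=
  prod_pos fun j _ => pqInt_one_pos hq₀ hq₁ j.succ_ne_zero

theorem pqBinom_one_zero_right (hq₀ : 0 ≤ q) (hq₁ : q < 1) (n : ℕ) : pqBinom 1 q n 0 = 1 := by
  simp [pqBinom, pqFact_zero, (pqFact_one_pos hq₀ hq₁ n).ne']

theorem pqBinom_one_self (hq₀ : 0 ≤ q) (hq₁ : q < 1) (n : ℕ) : pqBinom 1 q n n = 1 := by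
  simp [pqBinom, pqFact_zero, (pqFact_one_pos hq₀ hq₁ n).ne']

theorem pqBinom_one_nonneg (hq₀ : 0 ≤ q) (hq₁ : q < 1) (n k : ℕ) : 0 ≤ pqBinom 1 q n k :=
  have := pqFact_one_pos hq₀ hq₁
  div_nonneg (this n).le (mul_pos (this k) (this (n - k))).le

theorem pqBinom_one_succ_succ (hq₀ : 0 ≤ q) (hq₁ : q < 1) {n j : ℕ} (hj : j < n) :
    pqBinom 1 q (n + 1) (j + 1) = q ^ (j + 1) * pqBinom 1 q n (j + 1) + pqBinom 1 q n j := by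
  obtain ⟨m, rfl⟩ := Nat.exists_eq_add_of_lt hj
  have := pqFact_one_pos hq₀ hq₁
  have := pqInt_one_pos hq₀ hq₁ j.succ_ne_zero
  have := pqInt_one_pos hq₀ hq₁ m.succ_ne_zero
  have hn : j + m + 1 + 1 = j + 1 + (m + 1) := by ring
  simp only [pqBinom, show j + m + 1 + 1 - (j + 1) = m + 1 by omega,
    show j + m + 1 - (j + 1) = m by omega, show j + m + 1 - j = m + 1 by omega]
  rw [pqFact_succ _ _ (j + m + 1), pqFact_succ _ _ m, pqFact_succ _ _ j, hn,
    pqInt_one_add hq₁.ne (j + 1) (m + 1)]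
  field_simp
  ring

theorem pqInt_mul_pqBinom_one_succ (hq₀ : 0 ≤ q) (hq₁ : q < 1) (n j : ℕ) :
    pqInt 1 q (j + 1) * pqBinom 1 q (n + 1) (j + 1) = pqInt 1 q (n + 1) * pqBinom 1 q n j := by
  have := pqFact_one_pos hq₀ hq₁
  have := pqInt_one_pos hq₀ hq₁ j.succ_ne_zero
  rw [pqBinom, pqBinom, Nat.add_sub_add_right, pqFact_succ _ _ n, pqFact_succ _ _ j]
  field_simp

end QBinomial

section QBernsteinBasis

variable {q : ℝ}

theorem pqBern_one (n k : ℕ) (x : ℝ) :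
    pqBern 1 q n k x = pqBinom 1 q n k * x ^ k * ∏ s ∈ range (n - k), (1 - q ^ s * x) := by
  simp [pqBern]

theorem pqBern_one_nonneg (hq₀ : 0 ≤ q) (hq₁ : q < 1) (n k : ℕ) {x : ℝ} (hx : x ∈ Icc (0 : ℝ) 1) :
    0 ≤ pqBern 1 q n k x := by
  rw [pqBern_one]
  refine mul_nonneg (mul_nonneg (pqBinom_one_nonneg hq₀ hq₁ n k) (pow_nonneg hx.1 k))
    (prod_nonneg fun s _ => sub_nonneg.2 ?_)
  exact mul_le_one₀ (pow_le_one₀ hq₀ hq₁.le) hx.1 hx.2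

theorem prod_range_succ_one_sub_pow_mul (m : ℕ) (x : ℝ) :
    ∏ s ∈ range (m + 1), (1 - q ^ s * x) = (1 - x) * ∏ s ∈ range m, (1 - q ^ s * (q * x)) := by
  rw [prod_range_succ', pow_zero, one_mul, mul_comm]
  exact congrArg _ (prod_congr rfl fun s _ => by ring)

theorem pqBern_one_succ_zero (hq₀ : 0 ≤ q) (hq₁ : q < 1) (n : ℕ) (x : ℝ) :
    pqBern 1 q (n + 1) 0 x = (1 - x) * pqBern 1 q n 0 (q * x) := by
  simp [pqBern_one, pqBinom_one_zero_right hq₀ hq₁, prod_range_succ_one_sub_pow_mul]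

theorem pqBern_one_succ_self (hq₀ : 0 ≤ q) (hq₁ : q < 1) (n : ℕ) (x : ℝ) :
    pqBern 1 q (n + 1) (n + 1) x = x * pqBern 1 q n n x := by
  simp [pqBern_one, pqBinom_one_self hq₀ hq₁, pow_succ, mul_comm]

theorem pqBern_one_succ_succ (hq₀ : 0 ≤ q) (hq₁ : q < 1) {n j : ℕ} (hj : j < n) (x : ℝ) :
    pqBern 1 q (n + 1) (j + 1) x = (1 - x) * pqBern 1 q n (j + 1) (q * x) + x * pqBern 1 q n j x := by
  simp only [pqBern_one, pqBinom_one_succ_succ hq₀ hq₁ hj, Nat.add_sub_add_right,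
    show n - j = n - (j + 1) + 1 by omega, prod_range_succ_one_sub_pow_mul]
  ring

theorem sum_pqBern_one (hq₀ : 0 ≤ q) (hq₁ : q < 1) (n : ℕ) (x : ℝ) :
    ∑ k ∈ range (n + 1), pqBern 1 q n k x = 1 := by
  induction n generalizing x with
  | zero => simp [pqBern_one, pqBinom_one_zero_right hq₀ hq₁]
  | succ n ih =>
    have hx := ih x
    have hqx := ih (q * x)
    rw [sum_range_succ] at hx
    rw [sum_range_succ'] at hqx
    rw [sum_range_succ, sum_range_succ', pqBern_one_succ_self hq₀ hq₁,
      pqBern_one_succ_zero hq₀ hq₁,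
      sum_congr rfl fun j hj => pqBern_one_succ_succ hq₀ hq₁ (mem_range.1 hj) x,
      sum_add_distrib, ← mul_sum, ← mul_sum]
    linear_combination (1 - x) * hqx + x * hx

theorem sum_pqInt_mul_pqBern_one_succ (hq₀ : 0 ≤ q) (hq₁ : q < 1) (n : ℕ) (x : ℝ) (φ : ℕ → ℝ) :
    ∑ k ∈ range (n + 2), pqInt 1 q k * φ k * pqBern 1 q (n + 1) k x =
      pqInt 1 q (n + 1) * x * ∑ j ∈ range (n + 1), φ (j + 1) * pqBern 1 q n j x := by
  rw [sum_range_succ', pqInt_zero, zero_mul, zero_mul, add_zero, mul_sum]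
  refine sum_congr rfl fun j _ => ?_
  have key := pqInt_mul_pqBinom_one_succ hq₀ hq₁ n j
  simp only [pqBern_one, Nat.add_sub_add_right]
  linear_combination x * φ (j + 1) * x ^ j * (∏ s ∈ range (n - j), (1 - q ^ s * x)) * key

end QBernsteinBasis

section Moments

variable {q : ℝ}

theorem prod_range_succ_sub_pqInt (a : ℝ) (m : ℕ) :
    ∏ i ∈ range (m + 1), (a - pqInt 1 q i) = a * ∏ i ∈ range m, (a - pqInt 1 q (i + 1)) := by
  rw [prod_range_succ', pqInt_zero, sub_zero, mul_comm]

theorem sum_prod_pqInt_sub_mul_pqBern_one (hq₀ : 0 ≤ q) (hq₁ : q < 1) (m n : ℕ) (x : ℝ) :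
    ∑ k ∈ range (n + 1), (∏ i ∈ range m, (pqInt 1 q k - pqInt 1 q i)) * pqBern 1 q n k x =
      (∏ i ∈ range m, (pqInt 1 q n - pqInt 1 q i)) * x ^ m := by
  induction m generalizing n with
  | zero => simp [sum_pqBern_one hq₀ hq₁]
  | succ m ih =>
    have hsucc : ∀ j i, pqInt 1 q (j + 1) - pqInt 1 q (i + 1) = q * (pqInt 1 q j - pqInt 1 q i) :=
      fun j i => by rw [pqInt_one_succ hq₁.ne, pqInt_one_succ hq₁.ne]; ring
    cases n with
    | zero => simp [prod_range_succ']
    | succ n =>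
      simp only [prod_range_succ_sub_pqInt]
      rw [sum_pqInt_mul_pqBern_one_succ hq₀ hq₁]
      simp only [hsucc, prod_mul_distrib, prod_const, card_range, mul_assoc, ← mul_sum, ih]
      ring

end Moments

section CentralMoments

variable {q : ℝ}

theorem pqNode_one (n k : ℕ) : pqNode 1 q n k = pqInt 1 q k / pqInt 1 q n := by
  simp [pqNode]

theorem pqNode_one_mem_Icc (hq₀ : 0 ≤ q) (hq₁ : q < 1) {n k : ℕ} (hn : n ≠ 0) (hk : k ≤ n) :
    pqNode 1 q n k ∈ Icc (0 : ℝ) 1 := by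
  have hA := pqInt_one_pos hq₀ hq₁ hn
  rw [pqNode_one]
  exact ⟨div_nonneg (pqInt_one_nonneg hq₀ hq₁ k) hA.le,
    (div_le_one hA).2 (pqInt_one_mono hq₀ hq₁ hk)⟩

theorem pqMoment_one (n m : ℕ) (x : ℝ) :
    pqMoment 1 q n m x = ∑ k ∈ range (n + 1), (pqNode 1 q n k - x) ^ m * pqBern 1 q n k x := by
  simp [pqMoment]

theorem pqMoment_one_one (hq₀ : 0 ≤ q) (hq₁ : q < 1) {n : ℕ} (hn : n ≠ 0) (x : ℝ) :
    pqMoment 1 q n 1 x = 0 := by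
  have hA := (pqInt_one_pos hq₀ hq₁ hn).ne'
  have F0 := sum_pqBern_one hq₀ hq₁ n x
  have F1 := sum_prod_pqInt_sub_mul_pqBern_one hq₀ hq₁ 1 n x
  simp only [prod_range_one, pqInt_zero, sub_zero, pow_one] at F1
  set A := pqInt 1 q n
  simp only [pqMoment_one, pqNode_one]
  calc _ = A⁻¹ * ∑ k ∈ range (n + 1), pqInt 1 q k * pqBern 1 q n k x
        - x * ∑ k ∈ range (n + 1), pqBern 1 q n k x := by
        simp only [mul_sum, ← sum_sub_distrib]
        exact sum_congr rfl fun k _ => by ring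
    _ = 0 := by
      rw [F0, F1]
      field_simp
      ring

theorem pqMoment_one_two (hq₀ : 0 ≤ q) (hq₁ : q < 1) {n : ℕ} (hn : n ≠ 0) (x : ℝ) :
    pqMoment 1 q n 2 x = x * (1 - x) / pqInt 1 q n := by
  have hA := (pqInt_one_pos hq₀ hq₁ hn).ne'
  have c1 : pqInt 1 q 1 = 1 := by simp [pqInt_one_eq_sum hq₁.ne]
  have F0 := sum_pqBern_one hq₀ hq₁ n x
  have F1 := sum_prod_pqInt_sub_mul_pqBern_one hq₀ hq₁ 1 n x
  have F2 := sum_prod_pqInt_sub_mul_pqBern_one hq₀ hq₁ 2 n x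
  simp only [prod_range_succ, prod_range_zero, pqInt_zero, c1, sub_zero, one_mul, pow_one] at F1 F2
  set A := pqInt 1 q n
  simp only [pqMoment_one, pqNode_one]
  calc _ = A⁻¹ ^ 2 * ∑ k ∈ range (n + 1), pqInt 1 q k * (pqInt 1 q k - 1) * pqBern 1 q n k x
        + (A⁻¹ ^ 2 - 2 * x * A⁻¹) * ∑ k ∈ range (n + 1), pqInt 1 q k * pqBern 1 q n k x
        + x ^ 2 * ∑ k ∈ range (n + 1), pqBern 1 q n k x := by
        simp only [mul_sum, ← sum_add_distrib]
        exact sum_congr rfl fun k _ => by ring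
    _ = _ := by
      rw [F0, F1, F2]
      field_simp
      ring

theorem pqInt_one_pow_three_mul_pqMoment_one_four (hq₀ : 0 ≤ q) (hq₁ : q < 1) {n : ℕ}
    (hn : n ≠ 0) (x : ℝ) :
    pqInt 1 q n ^ 3 * pqMoment 1 q n 4 x = x * (1 - x) *
      ((pqInt 1 q n * (1 - q)) ^ 2 * x ^ 2
        + pqInt 1 q n * x * (3 * (1 - x) + (1 - q) * ((q + 2) ^ 2 * x - q - 4))
        + 1 - (1 + q) * x * (2 + q - (1 + q + q ^ 2) * x)) := by
  have hA := (pqInt_one_pos hq₀ hq₁ hn).ne'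
  have c1 : pqInt 1 q 1 = 1 := by simp [pqInt_one_eq_sum hq₁.ne]
  have c2 : pqInt 1 q 2 = 1 + q := by simp [pqInt_one_eq_sum hq₁.ne, sum_range_succ]
  have c3 : pqInt 1 q 3 = 1 + q + q ^ 2 := by simp [pqInt_one_eq_sum hq₁.ne, sum_range_succ]
  have F0 := sum_pqBern_one hq₀ hq₁ n x
  have F1 := sum_prod_pqInt_sub_mul_pqBern_one hq₀ hq₁ 1 n x
  have F2 := sum_prod_pqInt_sub_mul_pqBern_one hq₀ hq₁ 2 n x
  have F3 := sum_prod_pqInt_sub_mul_pqBern_one hq₀ hq₁ 3 n x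
  have F4 := sum_prod_pqInt_sub_mul_pqBern_one hq₀ hq₁ 4 n x
  simp only [prod_range_succ, prod_range_zero, pqInt_zero, c1, c2, c3, sub_zero, one_mul,
    pow_one] at F1 F2 F3 F4
  set A := pqInt 1 q n
  simp only [pqMoment_one, pqNode_one]
  calc _ = A ^ 3 * (A⁻¹ ^ 4 * ∑ k ∈ range (n + 1), pqInt 1 q k * (pqInt 1 q k - 1) *
            (pqInt 1 q k - (1 + q)) * (pqInt 1 q k - (1 + q + q ^ 2)) * pqBern 1 q n k x
        + (A⁻¹ ^ 4 * (3 + 2 * q + q ^ 2) - 4 * A⁻¹ ^ 3 * x) * ∑ k ∈ range (n + 1), pqInt 1 q k *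
            (pqInt 1 q k - 1) * (pqInt 1 q k - (1 + q)) * pqBern 1 q n k x
        + (A⁻¹ ^ 4 * (3 + 3 * q + q ^ 2) - 4 * A⁻¹ ^ 3 * x * (2 + q) + 6 * A⁻¹ ^ 2 * x ^ 2) *
            ∑ k ∈ range (n + 1), pqInt 1 q k * (pqInt 1 q k - 1) * pqBern 1 q n k x
        + (A⁻¹ ^ 4 - 4 * A⁻¹ ^ 3 * x + 6 * A⁻¹ ^ 2 * x ^ 2 - 4 * A⁻¹ * x ^ 3) *
            ∑ k ∈ range (n + 1), pqInt 1 q k * pqBern 1 q n k x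
        + x ^ 4 * ∑ k ∈ range (n + 1), pqBern 1 q n k x) := by
        simp only [mul_sum, ← sum_add_distrib]
        exact sum_congr rfl fun k _ => by ring
    _ = _ := by
      rw [F0, F1, F2, F3, F4]
      field_simp
      ring

theorem pqMoment_one_four_le (hq₀ : 0 ≤ q) (hq₁ : q < 1) {n : ℕ} (hn : n ≠ 0) {x : ℝ}
    (hx : x ∈ Icc (0 : ℝ) 1) : pqMoment 1 q n 4 x ≤ 2 / pqInt 1 q n ^ 2 := by
  obtain ⟨hx₀, hx₁⟩ := hx
  have hA : 1 ≤ pqInt 1 q n := one_le_pqInt_one hq₀ hq₁ hn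
  have hAq : pqInt 1 q n * (1 - q) ≤ 1 := by
    rw [pqInt_one_mul_one_sub hq₁.ne]
    linarith [pow_nonneg hq₀ n]
  have hAq₀ : 0 ≤ pqInt 1 q n * (1 - q) := mul_nonneg (by linarith) (by linarith)
  have hT₁ : (pqInt 1 q n * (1 - q)) ^ 2 * x ^ 2 ≤ 1 :=
    mul_le_one₀ (pow_le_one₀ hAq₀ hAq) (by positivity) (pow_le_one₀ hx₀ hx₁)
  have hinner : 3 * (1 - x) + (1 - q) * ((q + 2) ^ 2 * x - q - 4) ≤ 4 := by
    nlinarith [mul_nonneg (sub_nonneg.2 hq₁.le) (sub_nonneg.2 hx₁), sq_nonneg (1 - 3 / 2 * q),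
      mul_nonneg (mul_nonneg hq₀ hq₀) hq₀]
  have hT₂ : x * (3 * (1 - x) + (1 - q) * ((q + 2) ^ 2 * x - q - 4)) ≤ 4 := by nlinarith
  have hT₃ : 0 ≤ (1 + q) * x * (2 + q - (1 + q + q ^ 2) * x) := by
    have : 0 ≤ 2 + q - (1 + q + q ^ 2) * x := by nlinarith
    positivity
  have hx' : x * (1 - x) ≤ 1 / 4 := by nlinarith [sq_nonneg (x - 1 / 2)]
  set A := pqInt 1 q n
  have hcube : A ^ 3 * pqMoment 1 q n 4 x ≤ 3 / 2 * A := by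
    rw [pqInt_one_pow_three_mul_pqMoment_one_four hq₀ hq₁ hn x]
    calc _ ≤ x * (1 - x) * (6 * A) := by
          refine mul_le_mul_of_nonneg_left ?_ (by nlinarith)
          nlinarith
      _ ≤ 1 / 4 * (6 * A) := by gcongr
      _ = 3 / 2 * A := by ring
  rw [le_div_iff₀ (by positivity)]
  nlinarith

end CentralMoments

section Taylor

theorem abs_sub_taylor_two_le {f f' f'' : ℝ → ℝ} {x t C : ℝ}
    (hf : ∀ y ∈ uIcc x t, HasDerivWithinAt f (f' y) (uIcc x t) y)
    (hf' : ∀ y ∈ uIcc x t, HasDerivWithinAt f' (f'' y) (uIcc x t) y)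
    (hC : ∀ y ∈ uIcc x t, |f'' y - f'' x| ≤ C) :
    |f t - (f x + f' x * (t - x) + f'' x / 2 * (t - x) ^ 2)| ≤ C * (t - x) ^ 2 := by
  have hC₀ : 0 ≤ C := (abs_nonneg _).trans (hC x left_mem_uIcc)
  have hlin : ∀ y, HasDerivWithinAt (fun y => y - x) 1 (uIcc x t) y :=
    fun y => (hasDerivWithinAt_id y _).sub_const x
  have hR₁ : ∀ y ∈ uIcc x t, |f' y - (f' x + f'' x * (y - x))| ≤ C * |t - x| := by
    intro y hy
    have hderiv : ∀ z ∈ uIcc x t, HasDerivWithinAt (fun y => f' y - (f' x + f'' x * (y - x)))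
        (f'' z - f'' x) (uIcc x t) z := fun z hz =>
      ((hf' z hz).sub (((hlin z).const_mul (f'' x)).const_add (f' x))).congr_deriv (by ring)
    have := (convex_uIcc x t).norm_image_sub_le_of_norm_hasDerivWithin_le hderiv hC
      left_mem_uIcc hy
    simp only [sub_self, mul_zero, add_zero, sub_zero, Real.norm_eq_abs] at this
    exact this.trans (mul_le_mul_of_nonneg_left (abs_sub_left_of_mem_uIcc hy) hC₀)
  have hderiv : ∀ z ∈ uIcc x t, HasDerivWithinAt
      (fun y => f y - (f x + f' x * (y - x) + f'' x / 2 * (y - x) ^ 2))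
      (f' z - (f' x + f'' x * (z - x))) (uIcc x t) z := fun z hz =>
    ((hf z hz).sub ((((hlin z).const_mul (f' x)).const_add (f x)).add
      (((hlin z).pow 2).const_mul (f'' x / 2)))).congr_deriv (by ring)
  have := (convex_uIcc x t).norm_image_sub_le_of_norm_hasDerivWithin_le hderiv hR₁
    left_mem_uIcc right_mem_uIcc
  simp only [sub_self, mul_zero, add_zero, ne_eq, OfNat.ofNat_ne_zero, not_false_eq_true,
    zero_pow, sub_zero, Real.norm_eq_abs] at this
  rwa [mul_assoc, abs_mul_abs_self, ← sq] at this

theorem IsCompact.exists_abs_sub_le_add_mul_sq {g : ℝ → ℝ} {s : Set ℝ} (hs : IsCompact s)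
    (hg : ContinuousOn g s) {ε : ℝ} (hε : 0 < ε) :
    ∃ K, 0 ≤ K ∧ ∀ x ∈ s, ∀ y ∈ s, |g y - g x| ≤ ε + K * (y - x) ^ 2 := by
  rcases s.eq_empty_or_nonempty with rfl | ⟨z, hz⟩
  · exact ⟨0, le_rfl, by simp⟩
  obtain ⟨M, hM⟩ := hs.exists_bound_of_continuousOn hg
  obtain ⟨δ, hδ, hclose⟩ :=
    Metric.uniformContinuousOn_iff.1 (hs.uniformContinuousOn_of_continuous hg) ε hε
  have hM₀ : 0 ≤ M := (norm_nonneg _).trans (hM z hz)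
  refine ⟨2 * M / δ ^ 2, by positivity, fun x hx y hy => ?_⟩
  have hK : 0 ≤ 2 * M / δ ^ 2 * (y - x) ^ 2 := by positivity
  by_cases hyx : |y - x| < δ
  · have := hclose y hy x hx (by rwa [Real.dist_eq])
    rw [Real.dist_eq] at this
    linarith
  · have hδ₂ : δ ^ 2 ≤ (y - x) ^ 2 := sq_le_sq.2 ((abs_of_pos hδ).trans_le (not_lt.1 hyx))
    have h2M : 2 * M ≤ 2 * M / δ ^ 2 * (y - x) ^ 2 := by
      rw [div_mul_eq_mul_div, le_div_iff₀ (by positivity)]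
      exact mul_le_mul_of_nonneg_left hδ₂ (by positivity)
    have hMy : |g y| ≤ M := hM y hy
    have hMx : |g x| ≤ M := hM x hx
    linarith [abs_sub (g y) (g x)]

theorem ContDiffOn.exists_abs_sub_taylor_two_le {f : ℝ → ℝ} {a b : ℝ} (hab : a < b)
    (hf : ContDiffOn ℝ 2 f (Icc a b)) {ε : ℝ} (hε : 0 < ε) :
    ∃ K, 0 ≤ K ∧ ∀ x ∈ Icc a b, ∀ t ∈ Icc a b,
      |f t - (f x + derivWithin f (Icc a b) x * (t - x)
        + iteratedDerivWithin 2 f (Icc a b) x / 2 * (t - x) ^ 2)|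
        ≤ ε * (t - x) ^ 2 + K * (t - x) ^ 4 := by
  have hUD : UniqueDiffOn ℝ (Icc a b) := uniqueDiffOn_Icc hab
  obtain ⟨K, hK, hclose⟩ := isCompact_Icc.exists_abs_sub_le_add_mul_sq
    (hf.continuousOn_iteratedDerivWithin le_rfl hUD) hε
  refine ⟨K, hK, fun x hx t ht => ?_⟩
  have hsub : uIcc x t ⊆ Icc a b := uIcc_subset_Icc hx ht
  have hf' : ContDiffOn ℝ 1 (derivWithin f (Icc a b)) (Icc a b) :=
    hf.derivWithin hUD (by norm_num)
  have hf'' : iteratedDerivWithin 2 f (Icc a b) =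
      derivWithin (derivWithin f (Icc a b)) (Icc a b) := by
    rw [iteratedDerivWithin_succ, iteratedDerivWithin_one]
  calc _ ≤ (ε + K * (t - x) ^ 2) * (t - x) ^ 2 :=
        abs_sub_taylor_two_le
          (fun y hy => ((hf.differentiableOn (by norm_num) y (hsub hy)).hasDerivWithinAt).mono hsub)
          (fun y hy => by
            rw [hf'']
            exact ((hf'.differentiableOn (by norm_num) y (hsub hy)).hasDerivWithinAt).mono hsub)
          (fun y hy => (hclose x hx y (hsub hy)).trans <| by
            gcongr ε + K * ?_
            exact sq_le_sq.2 (abs_sub_left_of_mem_uIcc hy))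
    _ = _ := by ring

end Taylor

section Voronovskaja

variable {q : ℝ}

theorem pqBernstein_one (n : ℕ) (f : ℝ → ℝ) (x : ℝ) :
    pqBernstein 1 q n f x = ∑ k ∈ range (n + 1), f (pqNode 1 q n k) * pqBern 1 q n k x := by
  simp [pqBernstein]

theorem abs_pqInt_one_mul_pqBernstein_sub_sub_le (hq₀ : 0 ≤ q) (hq₁ : q < 1) {n : ℕ}
    (hn : n ≠ 0) {f : ℝ → ℝ} {x a b ε K : ℝ} (hx : x ∈ Icc (0 : ℝ) 1) (hε : 0 ≤ ε) (hK : 0 ≤ K)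
    (hR : ∀ t ∈ Icc (0 : ℝ) 1,
      |f t - (f x + a * (t - x) + b / 2 * (t - x) ^ 2)| ≤ ε * (t - x) ^ 2 + K * (t - x) ^ 4) :
    |pqInt 1 q n * (pqBernstein 1 q n f x - f x) - x * (1 - x) / 2 * b|
      ≤ ε + 2 * K / pqInt 1 q n := by
  set A := pqInt 1 q n
  have hA : 0 < A := pqInt_one_pos hq₀ hq₁ hn
  set t := pqNode 1 q n
  set P := fun k => pqBern 1 q n k x
  set R := fun s => f s - (f x + a * (s - x) + b / 2 * (s - x) ^ 2)
  have hsplit : pqBernstein 1 q n f x = f x * ∑ k ∈ range (n + 1), P k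
      + a * pqMoment 1 q n 1 x + b / 2 * pqMoment 1 q n 2 x + ∑ k ∈ range (n + 1), R (t k) * P k := by
    rw [pqBernstein_one, pqMoment_one, pqMoment_one]
    simp only [mul_sum, ← sum_add_distrib]
    exact sum_congr rfl fun k _ => by ring
  have hrem : |∑ k ∈ range (n + 1), R (t k) * P k|
      ≤ ε * pqMoment 1 q n 2 x + K * pqMoment 1 q n 4 x := by
    rw [pqMoment_one, pqMoment_one, mul_sum, mul_sum, ← sum_add_distrib]
    refine (abs_sum_le_sum_abs _ _).trans (sum_le_sum fun k hk => ?_)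
    have hP : 0 ≤ P k := pqBern_one_nonneg hq₀ hq₁ n k hx
    rw [abs_mul, abs_of_nonneg hP]
    calc |R (t k)| * P k ≤ (ε * (t k - x) ^ 2 + K * (t k - x) ^ 4) * P k :=
          mul_le_mul_of_nonneg_right
            (hR _ (pqNode_one_mem_Icc hq₀ hq₁ hn (Nat.lt_succ_iff.1 (mem_range.1 hk)))) hP
      _ = _ := by ring
  rw [pqMoment_one_two hq₀ hq₁ hn x] at hrem hsplit
  rw [hsplit, sum_pqBern_one hq₀ hq₁, pqMoment_one_one hq₀ hq₁ hn,
    show A * (f x * 1 + a * 0 + b / 2 * (x * (1 - x) / A) + ∑ k ∈ range (n + 1), R (t k) * P k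
      - f x) - x * (1 - x) / 2 * b = A * ∑ k ∈ range (n + 1), R (t k) * P k by field_simp; ring,
    abs_mul, abs_of_pos hA]
  have hx' : x * (1 - x) ≤ 1 := by nlinarith [hx.1, hx.2]
  calc A * |∑ k ∈ range (n + 1), R (t k) * P k|
      ≤ A * (ε * (x * (1 - x) / A) + K * (2 / A ^ 2)) := by
        gcongr
        exact hrem.trans (by gcongr; exact pqMoment_one_four_le hq₀ hq₁ hn hx)
    _ = ε * (x * (1 - x)) + 2 * K / A := by field_simp
    _ ≤ ε * 1 + 2 * K / A := by gcongr
    _ = ε + 2 * K / A := by rw [mul_one]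

end Voronovskaja

section Reduction

theorem Nat.add_mul_add_sub_one_div_two (k m : ℕ) :
    (k + m) * (k + m - 1) / 2 = k * (k - 1) / 2 + k * m + m * (m - 1) / 2 := by
  rw [← sum_range_id, ← sum_range_id, ← sum_range_id, sum_range_add, sum_add_distrib, sum_const,
    card_range, smul_eq_mul]
  ring

variable {p q : ℝ}

theorem pqInt_eq_pow_mul_pqInt_one (hp : p ≠ 0) (k : ℕ) :
    pqInt p q k = p ^ (k - 1) * pqInt 1 (q / p) k := by
  rcases eq_or_ne q p with rfl | hqp
  · simp [pqInt, div_self hp]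
  cases k with
  | zero => simp [pqInt]
  | succ k =>
    have : q / p ≠ 1 := by rwa [ne_eq, div_eq_one_iff_eq hp]
    simp only [pqInt, one_pow, div_pow, Nat.add_sub_cancel]
    field_simp [sub_ne_zero.2 hqp, sub_ne_zero.2 hqp.symm]
    ring

theorem pqFact_eq_pow_mul_pqFact_one (hp : p ≠ 0) (k : ℕ) :
    pqFact p q k = p ^ (k * (k - 1) / 2) * pqFact 1 (q / p) k := by
  simp only [pqFact, pqInt_eq_pow_mul_pqInt_one hp, Nat.add_sub_cancel, prod_mul_distrib]
  rw [prod_pow_eq_pow_sum, sum_range_id]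

theorem pqBinom_eq_pow_mul_pqBinom_one (hp : p ≠ 0) {n k : ℕ} (hk : k ≤ n) :
    pqBinom p q n k = p ^ (k * (n - k)) * pqBinom 1 (q / p) n k := by
  obtain ⟨m, rfl⟩ := Nat.exists_eq_add_of_le hk
  simp only [pqBinom, pqFact_eq_pow_mul_pqFact_one hp, Nat.add_sub_cancel_left,
    Nat.add_mul_add_sub_one_div_two, pow_add]
  field_simp

theorem prod_pow_sub_pow_mul_eq (hp : p ≠ 0) (m : ℕ) (x : ℝ) :
    ∏ s ∈ range m, (p ^ s - q ^ s * x) =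
      p ^ (m * (m - 1) / 2) * ∏ s ∈ range m, (1 - (q / p) ^ s * x) := by
  rw [← sum_range_id, ← prod_pow_eq_pow_sum, ← prod_mul_distrib]
  refine prod_congr rfl fun s _ => ?_
  rw [div_pow]
  field_simp

theorem pqBern_eq_pow_mul_pqBern_one (hp : p ≠ 0) {n k : ℕ} (hk : k ≤ n) (x : ℝ) :
    pqBern p q n k x = p ^ (n * (n - 1) / 2) * pqBern 1 (q / p) n k x := by
  obtain ⟨m, rfl⟩ := Nat.exists_eq_add_of_le hk
  rw [pqBern, pqBern_one, pqBinom_eq_pow_mul_pqBinom_one hp hk, prod_pow_sub_pow_mul_eq hp,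
    Nat.add_sub_cancel_left, Nat.add_mul_add_sub_one_div_two, pow_add, pow_add]
  ring

theorem pqNode_eq_pqNode_one (hp : p ≠ 0) {n k : ℕ} (hk : k ≤ n) :
    pqNode p q n k = pqNode 1 (q / p) n k := by
  rcases Nat.eq_zero_or_pos k with rfl | hk₀
  · simp [pqNode, pqInt]
  rw [pqNode, pqNode, pqInt_eq_pow_mul_pqInt_one hp, pqInt_eq_pow_mul_pqInt_one hp, one_pow,
    one_mul, show n - 1 = (n - k) + (k - 1) by omega, pow_add]
  field_simp

theorem pqBernstein_eq_pqBernstein_one (hp : p ≠ 0) (n : ℕ) (f : ℝ → ℝ) (x : ℝ) :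
    pqBernstein p q n f x = pqBernstein 1 (q / p) n f x := by
  have hterm : ∀ k ∈ range (n + 1), f (pqNode p q n k) * pqBern p q n k x =
      p ^ (n * (n - 1) / 2) * (f (pqNode 1 (q / p) n k) * pqBern 1 (q / p) n k x) := by
    intro k hk
    have hk : k ≤ n := Nat.lt_succ_iff.1 (mem_range.1 hk)
    rw [pqNode_eq_pqNode_one hp hk, pqBern_eq_pow_mul_pqBern_one hp hk]
    ring
  rw [pqBernstein, sum_congr rfl hterm, ← mul_sum, inv_mul_cancel_left₀ (pow_ne_zero _ hp),
    pqBernstein_one]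

theorem pqInt_mul_pqBernstein_sub_eq (hp : p ≠ 0) (n : ℕ) (f : ℝ → ℝ) (x : ℝ) :
    pqInt p q n * (pqBernstein p q n f x - f x) =
      p ^ (n - 1) * (pqInt 1 (q / p) n * (pqBernstein 1 (q / p) n f x - f x)) := by
  rw [pqInt_eq_pow_mul_pqInt_one hp, pqBernstein_eq_pqBernstein_one hp, mul_assoc]

end Reduction

theorem tendsto_pqInt_one_atTop {qs : ℕ → ℝ} (hq₀ : ∀ n, 0 ≤ qs n) (hq₁ : ∀ n, qs n < 1)
    (hqn : Tendsto (fun n => qs n ^ n) atTop (𝓝 1)) :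
    Tendsto (fun n => pqInt 1 (qs n) n) atTop atTop :=
  tendsto_atTop_mono (fun n => natCast_mul_pow_le_pqInt_one (hq₀ n) (hq₁ n) n)
    (tendsto_natCast_atTop_atTop.atTop_mul_pos one_pos hqn)

theorem tendstoUniformlyOn_pqInt_one_mul_pqBernstein_sub {qs : ℕ → ℝ} (hq₀ : ∀ n, 0 ≤ qs n)
    (hq₁ : ∀ n, qs n < 1) (hA : Tendsto (fun n => pqInt 1 (qs n) n) atTop atTop) {f : ℝ → ℝ}
    (hf : ContDiffOn ℝ 2 f (Icc 0 1)) :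
    TendstoUniformlyOn (fun n x => pqInt 1 (qs n) n * (pqBernstein 1 (qs n) n f x - f x))
      (fun x => x * (1 - x) / 2 * iteratedDerivWithin 2 f (Icc 0 1) x) atTop (Icc 0 1) := by
  rw [Metric.tendstoUniformlyOn_iff]
  intro ε hε
  obtain ⟨K, hK, hR⟩ := hf.exists_abs_sub_taylor_two_le zero_lt_one (half_pos hε)
  have hsmall : ∀ᶠ n in atTop, 2 * K / pqInt 1 (qs n) n < ε / 2 :=
    (tendsto_const_nhds.div_atTop hA).eventually (gt_mem_nhds (half_pos hε))
  filter_upwards [hsmall, eventually_ne_atTop 0] with n hn hn₀ x hx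
  rw [dist_comm, Real.dist_eq]
  have := abs_pqInt_one_mul_pqBernstein_sub_sub_le (hq₀ n) (hq₁ n) hn₀ hx (half_pos hε).le hK
    (hR x hx)
  linarith

theorem TendstoUniformlyOn.mul_of_tendsto_one {ι α : Type*} {l : Filter ι} {s : Set α}
    {F : ι → α → ℝ} {G : α → ℝ} {c : ι → ℝ} (hF : TendstoUniformlyOn F G l s)
    (hc : Tendsto c l (𝓝 1)) {M : ℝ} (hG : ∀ x ∈ s, |G x| ≤ M) :
    TendstoUniformlyOn (fun n x => c n * F n x) G l s := by
  rw [Metric.tendstoUniformlyOn_iff] at hF ⊢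
  intro ε hε
  have hM : 0 < |M| + 1 := by positivity
  have hc' := Metric.tendsto_nhds.1 hc (min 1 (ε / 2 / (|M| + 1))) (by positivity)
  filter_upwards [hF (ε / 4) (by positivity), hc'] with n hFn hcn x hx
  specialize hFn x hx
  rw [Real.dist_eq] at hcn ⊢
  rw [dist_comm, Real.dist_eq] at hFn
  have hc1 : |c n - 1| < 1 := hcn.trans_le (min_le_left _ _)
  have hc2 : |c n - 1| * (|M| + 1) < ε / 2 :=
    (lt_div_iff₀ hM).1 (hcn.trans_le (min_le_right _ _))
  have hGx : |G x| ≤ |M| + 1 := by linarith [hG x hx, le_abs_self M]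
  have hcn2 : |c n| ≤ 2 := by linarith [abs_sub_abs_le_abs_sub (c n) 1, abs_one (α := ℝ)]
  rw [abs_sub_comm, show c n * F n x - G x = c n * (F n x - G x) + (c n - 1) * G x by ring]
  calc _ ≤ |c n| * |F n x - G x| + |c n - 1| * |G x| := by
        rw [← abs_mul, ← abs_mul]; exact abs_add_le _ _
    _ ≤ 2 * (ε / 4) + |c n - 1| * (|M| + 1) := by gcongr
    _ < ε := by linarith

/-- the Voronovskaja-type theorem:
`[n](B_{n,p_n,q_n}(f;x) - f(x)) → x(1-x)f''(x)/2` uniformly on `[0,1]`. -/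
theorem pq_bernstein_voronovskaja_limit (ps qs : ℕ → ℝ)
    (hq : ∀ n, 0 < qs n) (hqp : ∀ n, qs n < ps n) (hp : ∀ n, ps n ≤ 1)
    (hpl : Filter.Tendsto (fun n => ps n ^ n) Filter.atTop (nhds 1))
    (hql : Filter.Tendsto (fun n => qs n ^ n) Filter.atTop (nhds 1))
    (f : ℝ → ℝ) (hf : ContDiffOn ℝ 2 f (Set.Icc 0 1)) :
    TendstoUniformlyOn
      (fun n x => pqInt (ps n) (qs n) n * (pqBernstein (ps n) (qs n) n f x - f x))
      (fun x => x * (1 - x) / 2 * iteratedDerivWithin 2 f (Set.Icc 0 1) x)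
      Filter.atTop (Set.Icc 0 1) := by
  have hp₀ : ∀ n, 0 < ps n := fun n => (hq n).trans (hqp n)
  have ht₀ : ∀ n, 0 ≤ qs n / ps n := fun n => (div_pos (hq n) (hp₀ n)).le
  have ht₁ : ∀ n, qs n / ps n < 1 := fun n => (div_lt_one (hp₀ n)).2 (hqp n)
  have htn : Tendsto (fun n => (qs n / ps n) ^ n) atTop (𝓝 1) := by
    simpa only [div_pow, div_one, Pi.div_def] using hql.div hpl one_ne_zero
  have hpn : Tendsto (fun n => ps n ^ (n - 1)) atTop (𝓝 1) :=
    tendsto_of_tendsto_of_tendsto_of_le_of_le hpl tendsto_const_nhds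
      (fun n => pow_le_pow_of_le_one (hp₀ n).le (hp n) (Nat.sub_le n 1))
      (fun n => pow_le_one₀ (hp₀ n).le (hp n))
  obtain ⟨M, hM⟩ := isCompact_Icc.exists_bound_of_continuousOn
    ((continuousOn_id.mul (continuousOn_const.sub continuousOn_id)).div_const 2 |>.mul
      (hf.continuousOn_iteratedDerivWithin le_rfl (uniqueDiffOn_Icc zero_lt_one)))
  simp only [fun n => pqInt_mul_pqBernstein_sub_eq (hp₀ n).ne' n f]
  exact (tendstoUniformlyOn_pqInt_one_mul_pqBernstein_sub ht₀ ht₁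
    (tendsto_pqInt_one_atTop ht₀ ht₁ htn) hf).mul_of_tendsto_one hpn hM
end
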